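/- For a metric-compatible connection (Riemann–Cartan case, D_κ g_{μν} = 0) and orthogonal infinitesimal vectors X^μ, Y^μ, the area of the 'parallelogram' polygon generated by parallel transport (as in the Burgers vector construction) equals, up to higher-order terms, A = |X||Y|(1 - (1/2)(X^μ + Y^μ) T_μ); in particular it reduces to the flat parallelogram area |X||Y| when the torsion trace T_μ vanishes. -/
import Mathlib


open scoped BigOperators

/-- Partial derivative `∂_μ f` at `x` (coordinate direction `μ`). -/
noncomputable def pd {n : ℕ} (μ : Fin n) (f : (Fin n → ℝ) → ℝ) (x : Fin n → ℝ) : ℝ :=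
  fderiv ℝ f x (Pi.single μ 1)


/-- Planar cross product. -/
def cross2 (p q : Fin 2 → ℝ) : ℝ := p 0 * q 1 - p 1 * q 0

/-- The (shoelace) area of the pentagon of Fig. 1: vertices `0`, `εX`,
`εX + (parallel transport of εY along εX)`, `εY + (parallel transport of εX along εY)`,
`εY`, where parallel transport to first order subtracts `ε² Γ(·,·)`. -/
noncomputable def burgersPolygonArea (Γ : Fin 2 → Fin 2 → Fin 2 → ℝ)
    (X Y : Fin 2 → ℝ) (ε : ℝ) : ℝ :=
  let P : Fin 5 → Fin 2 → ℝ :=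
    ![(0 : Fin 2 → ℝ),
      ε • X,
      ε • X + ε • Y - (ε ^ 2) • (fun κ => ∑ μ, ∑ ν, Γ μ ν κ * X μ * Y ν),
      ε • Y + ε • X - (ε ^ 2) • (fun κ => ∑ μ, ∑ ν, Γ μ ν κ * Y μ * X ν),
      ε • Y]
  (1 / 2) * |∑ i : Fin 5, cross2 (P i) (P (i + 1))|

private lemma burgers_area_eq (Γ : Fin 2 → Fin 2 → Fin 2 → ℝ)
    (X Y : Fin 2 → ℝ)
    (hmc : ∀ μ ν κ, Γ μ ν κ = -Γ μ κ ν)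
    (horth : (∑ i, X i * Y i) = 0) (ε : ℝ) :
    burgersPolygonArea Γ X Y ε =
      1 / 2 * (|X 0 * Y 1 - X 1 * Y 0| *
        |2 * ε ^ 2 - (∑ μ, (X μ + Y μ) * (∑ κ, (Γ κ μ κ - Γ μ κ κ))) * ε ^ 3
          - ((Γ 0 0 1 * X 0 + Γ 1 0 1 * X 1) * (Γ 0 0 1 * Y 0 + Γ 1 0 1 * Y 1)) * ε ^ 4|) := by
  have h2 : X 0 * Y 0 + X 1 * Y 1 = 0 := by simpa [Fin.sum_univ_two] using horth
  have g000 : Γ 0 0 0 = 0 := by have := hmc 0 0 0; linarith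
  have g011 : Γ 0 1 1 = 0 := by have := hmc 0 1 1; linarith
  have g100 : Γ 1 0 0 = 0 := by have := hmc 1 0 0; linarith
  have g111 : Γ 1 1 1 = 0 := by have := hmc 1 1 1; linarith
  have g010 : Γ 0 1 0 = -Γ 0 0 1 := hmc 0 1 0
  have g110 : Γ 1 1 0 = -Γ 1 0 1 := hmc 1 1 0
  unfold burgersPolygonArea
  simp only [Fin.sum_univ_five, Fin.sum_univ_two, cross2, Matrix.cons_val_zero,
    Matrix.cons_val_one, Matrix.head_cons, Matrix.cons_val_two, Matrix.tail_cons,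
    Matrix.cons_val_three, Matrix.cons_val_four, Pi.add_apply, Pi.sub_apply,
    Pi.smul_apply, smul_eq_mul, Pi.zero_apply, Fin.isValue, show ((4 : Fin 5) + 1 = 0) by decide,
    show ((0 : Fin 5) + 1 = 1) by decide, show ((1 : Fin 5) + 1 = 2) by decide,
    show ((2 : Fin 5) + 1 = 3) by decide, show ((3 : Fin 5) + 1 = 4) by decide]
  rw [← abs_mul]
  congr 2
  rw [g000, g011, g100, g111, g010, g110]
  linear_combination (ε ^ 3 * (Γ 0 0 1 * (Y 0 - X 0) + Γ 1 0 1 * (Y 1 - X 1))) * h2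

/-- For a metric-compatible connection (here at a point in orthonormal coordinates, so that
`Γ_{μνκ} = -Γ_{μκν}`) and orthogonal vectors `X`, `Y`, the area of the Burgers polygon is,
up to higher order, `A = |X||Y|(1 - (1/2)(X^μ + Y^μ)T_μ)`; in particular it reduces to the
parallelogram area `|X||Y|` when the torsion trace vanishes. -/
theorem burgersPolygonArea_asymptotics (Γ : Fin 2 → Fin 2 → Fin 2 → ℝ)
    (X Y : Fin 2 → ℝ)
    (hmc : ∀ μ ν κ, Γ μ ν κ = -Γ μ κ ν)
    (horth : (∑ i, X i * Y i) = 0) :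
    ((fun ε : ℝ =>
        burgersPolygonArea Γ X Y ε
          - ε ^ 2 * (Real.sqrt (∑ i, X i ^ 2) * Real.sqrt (∑ i, Y i ^ 2))
              * (1 - (1 / 2) * ε * ∑ μ, (X μ + Y μ) * (∑ κ, (Γ κ μ κ - Γ μ κ κ))))
        =o[nhdsWithin 0 (Set.Ioi 0)] fun ε => ε ^ 3)
    ∧ ((∀ μ, (∑ κ, (Γ κ μ κ - Γ μ κ κ)) = 0) →
        (fun ε : ℝ =>
            burgersPolygonArea Γ X Y ε
              - ε ^ 2 * (Real.sqrt (∑ i, X i ^ 2) * Real.sqrt (∑ i, Y i ^ 2)))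
          =o[nhdsWithin 0 (Set.Ioi 0)] fun ε => ε ^ 3) := by
  have h2 : X 0 * Y 0 + X 1 * Y 1 = 0 := by simpa [Fin.sum_univ_two] using horth
  set c : ℝ := X 0 * Y 1 - X 1 * Y 0 with hc
  set Q : ℝ := ∑ μ, (X μ + Y μ) * (∑ κ, (Γ κ μ κ - Γ μ κ κ)) with hQ
  set Pc : ℝ := (Γ 0 0 1 * X 0 + Γ 1 0 1 * X 1) * (Γ 0 0 1 * Y 0 + Γ 1 0 1 * Y 1) with hPc
  -- the norm product equals |c|
  have hs : Real.sqrt (∑ i, X i ^ 2) * Real.sqrt (∑ i, Y i ^ 2) = |c| := by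
    rw [Fin.sum_univ_two, Fin.sum_univ_two, ← Real.sqrt_mul (by positivity),
      show (X 0 ^ 2 + X 1 ^ 2) * (Y 0 ^ 2 + Y 1 ^ 2) = c ^ 2 by
        rw [hc]; linear_combination (X 0 * Y 0 + X 1 * Y 1) * h2,
      Real.sqrt_sq_eq_abs]
  have hmain : (fun ε : ℝ =>
        burgersPolygonArea Γ X Y ε
          - ε ^ 2 * (Real.sqrt (∑ i, X i ^ 2) * Real.sqrt (∑ i, Y i ^ 2))
              * (1 - (1 / 2) * ε * Q))
        =o[nhdsWithin 0 (Set.Ioi 0)] fun ε => ε ^ 3 := by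
    have hlo : (fun ε : ℝ => (-(|c| * Pc / 2)) * ε ^ 4)
        =o[nhdsWithin 0 (Set.Ioi 0)] fun ε => ε ^ 3 := by
      refine ((Asymptotics.isLittleO_pow_pow (by norm_num : 3 < 4)).const_mul_left
        (-(|c| * Pc / 2))).mono nhdsWithin_le_nhds
    refine hlo.congr' ?_ Filter.EventuallyEq.rfl
    have hδ : (0 : ℝ) < 1 / (1 + |Q| + |Pc|) := by positivity
    filter_upwards [Ioo_mem_nhdsGT_of_mem
      (Set.mem_Ico.2 ⟨le_refl 0, hδ⟩)] with ε hε
    obtain ⟨hε0, hεδ⟩ := hε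
    have hε1 : ε ≤ 1 := by
      have h1 : 1 / (1 + |Q| + |Pc|) ≤ 1 := by
        rw [div_le_one (by positivity)]
        have := abs_nonneg Q; have := abs_nonneg Pc; linarith
      linarith
    have hεQP : ε * (|Q| + |Pc|) ≤ 1 := by
      have h3 : ε * (1 + |Q| + |Pc|) ≤ 1 := by
        rw [div_eq_inv_mul, mul_one] at hεδ
        calc ε * (1 + |Q| + |Pc|) ≤ (1 + |Q| + |Pc|)⁻¹ * (1 + |Q| + |Pc|) := by
              apply mul_le_mul_of_nonneg_right hεδ.le (by positivity)
          _ = 1 := by field_simp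
      nlinarith
    have hpos : 0 ≤ 2 - Q * ε - Pc * ε ^ 2 := by
      have hq : Q * ε ≤ |Q| * ε := mul_le_mul_of_nonneg_right (le_abs_self Q) hε0.le
      have hp : Pc * ε ^ 2 ≤ |Pc| * ε ^ 2 :=
        mul_le_mul_of_nonneg_right (le_abs_self Pc) (by positivity)
      have hp2 : |Pc| * ε ^ 2 ≤ |Pc| * ε := by
        have : ε ^ 2 ≤ ε := by nlinarith
        exact mul_le_mul_of_nonneg_left this (abs_nonneg _)
      nlinarith
    have harea := burgers_area_eq Γ X Y hmc horth ε
    rw [← hQ, ← hPc, ← hc] at harea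
    have habs : |2 * ε ^ 2 - Q * ε ^ 3 - Pc * ε ^ 4| =
        ε ^ 2 * (2 - Q * ε - Pc * ε ^ 2) := by
      rw [show 2 * ε ^ 2 - Q * ε ^ 3 - Pc * ε ^ 4 = ε ^ 2 * (2 - Q * ε - Pc * ε ^ 2) by ring]
      exact abs_of_nonneg (by positivity)
    rw [harea, habs, hs]
    ring
  refine ⟨hmain, fun hT => ?_⟩
  have h0 : Q = 0 := by rw [hQ]; simp [hT]
  rw [h0] at hmain
  simpa using hmain
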